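/- Let 0 < p < ∞ and Ω = (Ω_n)_n positive with W_n = Σ_{k=0}^n Ω_k. Then for every sequence f, ‖f‖_{d^∞(Ω,p)'} = Σ_{n=0}^∞ f*(n) W_n^{-1/p}, i.e., the associate space of the weak Lorentz sequence space d^∞(Ω,p) is d(W^{-1/p}, 1) with equality of norms. -/

import Mathlib

open MeasureTheory Set
open scoped ENNReal NNReal

/-- Nonincreasing rearrangement of a sequence (w.r.t. counting measure on ℕ). -/
noncomputable def rearrSeq (f : ℕ → ℝ) (n : ℕ) : ℝ≥0∞ :=
  sInf {s : ℝ≥0∞ | Measure.count {k : ℕ | s < ENNReal.ofReal |f k|} ≤ (n : ℝ≥0∞)}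

/-- The weak Lorentz sequence space quasi-norm `‖g‖_{d^∞(Ω,p)} = sup_n W_n^{1/p} g*(n)`. -/
noncomputable def wdNorm (Ω : ℕ → ℝ) (p : ℝ) (g : ℕ → ℝ) : ℝ≥0∞ :=
  ⨆ n : ℕ, ENNReal.ofReal ((∑ k ∈ Finset.range (n + 1), Ω k) ^ (1 / p)) * rearrSeq g n

section basic
variable (a : ℕ → ℝ≥0∞)

noncomputable def rearrE (a : ℕ → ℝ≥0∞) (n : ℕ) : ℝ≥0∞ :=
  sInf {s : ℝ≥0∞ | Measure.count {k : ℕ | s < a k} ≤ (n : ℝ≥0∞)}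

lemma dist_antitone {s t : ℝ≥0∞} (h : s ≤ t) :
    Measure.count {k : ℕ | t < a k} ≤ Measure.count {k : ℕ | s < a k} :=
  measure_mono (fun k hk => lt_of_le_of_lt h hk)

lemma rearrE_mem (n : ℕ) :
    Measure.count {k : ℕ | rearrE a n < a k} ≤ (n : ℝ≥0∞) := by
  set S := {s : ℝ≥0∞ | Measure.count {k : ℕ | s < a k} ≤ (n : ℝ≥0∞)} with hS
  have hne : (⊤ : ℝ≥0∞) ∈ S := by
    simp only [hS, mem_setOf_eq]
    have he : {k : ℕ | (⊤:ℝ≥0∞) < a k} = (∅ : Set ℕ) := by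
      ext k; simp [not_top_lt]
    rw [he]; simp
  have hSne : S.Nonempty := ⟨⊤, hne⟩
  by_cases htop : sInf S = ⊤
  · rw [rearrE, htop]
    have : {k : ℕ | (⊤:ℝ≥0∞) < a k} = ∅ := by
      ext k; simp [not_top_lt]
    rw [this]; simp
  · -- choose s_m ∈ S with s_m ≤ sInf S + 1/(m+1)
    have hsm : ∀ m : ℕ, ∃ s ∈ S, s < sInf S + (m:ℝ≥0∞)⁻¹ := by
      intro m
      apply exists_lt_of_csInf_lt hSne
      exact ENNReal.lt_add_right htop (ENNReal.inv_ne_zero.2 (ENNReal.natCast_ne_top m))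
    choose sm hsmS hsmlt using hsm
    have hcover : {k : ℕ | rearrE a n < a k} ⊆ ⋃ m : ℕ, {k : ℕ | sm m < a k} := by
      intro k hk
      simp only [mem_setOf_eq, rearrE] at hk
      have hpos : 0 < a k - sInf S := tsub_pos_iff_lt.2 hk
      obtain ⟨m, hm⟩ := ENNReal.exists_inv_nat_lt (ne_of_gt hpos)
      refine mem_iUnion.2 ⟨m, ?_⟩
      simp only [mem_setOf_eq]
      have h2 : sInf S + (m:ℝ≥0∞)⁻¹ < sInf S + (a k - sInf S) :=
        ENNReal.add_lt_add_left htop hm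
      have h3 : sInf S + (a k - sInf S) = a k := add_tsub_cancel_of_le hk.le
      exact lt_of_le_of_lt (hsmlt m).le (h3 ▸ h2)
    calc Measure.count {k : ℕ | rearrE a n < a k}
        ≤ Measure.count (⋃ m : ℕ, {k : ℕ | sm m < a k}) := measure_mono hcover
      _ = ⨆ m, Measure.count {k : ℕ | sm m < a k} := by
          apply Directed.measure_iUnion
          intro i j
          rcases le_total (sm i) (sm j) with h | h
          · exact ⟨i, subset_refl _, fun k hk => lt_of_le_of_lt h hk⟩
          · exact ⟨j, fun k hk => lt_of_le_of_lt h hk, subset_refl _⟩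
      _ ≤ n := iSup_le fun m => hsmS m

lemma rearrE_le_iff {n : ℕ} {s : ℝ≥0∞} :
    rearrE a n ≤ s ↔ Measure.count {k : ℕ | s < a k} ≤ (n : ℝ≥0∞) := by
  constructor
  · intro h
    exact le_trans (dist_antitone a h) (rearrE_mem a n)
  · intro h; exact sInf_le h

lemma lt_rearrE_iff {n : ℕ} {s : ℝ≥0∞} :
    s < rearrE a n ↔ (n : ℝ≥0∞) < Measure.count {k : ℕ | s < a k} := by
  rw [← not_le, ← not_le, rearrE_le_iff]

lemma rearrE_antitone : Antitone (rearrE a) := by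
  intro m n h
  apply sInf_le_sInf
  intro s hs
  simp only [mem_setOf_eq] at hs ⊢
  exact le_trans hs (by exact_mod_cast h)

end basic

lemma count_natCast_lt (X : ℝ≥0∞) (hX : X = ⊤ ∨ ∃ m : ℕ, X = m) :
    Measure.count {n : ℕ | (n : ℝ≥0∞) < X} = X := by
  rcases hX with h | ⟨m, h⟩
  · subst h
    have h2 : {n : ℕ | (n:ℝ≥0∞) < ⊤} = univ := by
      ext n; simp [ENNReal.natCast_lt_top]
    rw [h2]
    exact Measure.count_apply_infinite Set.infinite_univ
  · subst h
    have : {n : ℕ | (n:ℝ≥0∞) < (m:ℝ≥0∞)} = ↑(Finset.range m) := by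
      ext n; simp [Nat.cast_lt]
    rw [this, Measure.count_apply_finset]; simp

lemma count_cases (A : Set ℕ) : Measure.count A = ⊤ ∨ ∃ m : ℕ, Measure.count A = m := by
  rcases A.finite_or_infinite with h | h
  · exact Or.inr ⟨h.toFinset.card, Measure.count_apply_finite A h⟩
  · exact Or.inl (Measure.count_apply_infinite h)

lemma layer_vol (x : ℝ≥0∞) : volume {s : ℝ | 0 < s ∧ ENNReal.ofReal s < x} = x := by
  by_cases hx : x = ⊤
  · subst hx
    have : {s : ℝ | 0 < s ∧ ENNReal.ofReal s < ⊤} = Ioi 0 := by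
      ext s; simp [ENNReal.ofReal_lt_top]
    rw [this]; exact Real.volume_Ioi
  · have : {s : ℝ | 0 < s ∧ ENNReal.ofReal s < x} = Ioo 0 x.toReal := by
      ext s
      simp only [mem_setOf_eq, mem_Ioo]
      constructor
      · rintro ⟨h1, h2⟩; exact ⟨h1, (ENNReal.ofReal_lt_iff_lt_toReal h1.le hx).1 h2⟩
      · rintro ⟨h1, h2⟩; exact ⟨h1, (ENNReal.ofReal_lt_iff_lt_toReal h1.le hx).2 h2⟩
    rw [this, Real.volume_Ioo, sub_zero, ENNReal.ofReal_toReal hx]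

lemma layer_mble (x : ℝ≥0∞) : MeasurableSet {s : ℝ | 0 < s ∧ ENNReal.ofReal s < x} := by
  exact (measurableSet_Ioi.inter (ENNReal.measurable_ofReal (measurableSet_Iio)))

lemma double_layer (a b : ℕ → ℝ≥0∞) :
    ∑' k, a k * b k = ∫⁻ s : ℝ, ∫⁻ t : ℝ,
      Measure.count {k : ℕ | (0 < s ∧ ENNReal.ofReal s < a k) ∧ (0 < t ∧ ENNReal.ofReal t < b k)} := by
  have mbleP : ∀ x : ℝ≥0∞, Measurable ({s : ℝ | 0 < s ∧ ENNReal.ofReal s < x}.indicator (1 : ℝ → ℝ≥0∞)) :=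
    fun x => measurable_const.indicator (layer_mble x)
  have key : ∀ k : ℕ, a k * b k = ∫⁻ s : ℝ, ∫⁻ t : ℝ,
      ({s : ℝ | 0 < s ∧ ENNReal.ofReal s < a k}.indicator (1 : ℝ → ℝ≥0∞) s) *
      ({t : ℝ | 0 < t ∧ ENNReal.ofReal t < b k}.indicator (1 : ℝ → ℝ≥0∞) t) := by
    intro k
    conv_lhs => rw [← layer_vol (a k), ← layer_vol (b k)]
    rw [← lintegral_indicator_one (layer_mble (a k)), ← lintegral_indicator_one (layer_mble (b k))]
    rw [← lintegral_mul_const _ (mbleP (a k))]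
    congr 1
    ext s
    rw [lintegral_const_mul _ (mbleP (b k)), lintegral_indicator_one (layer_mble (b k))]
  calc ∑' k, a k * b k
      = ∑' k, ∫⁻ s : ℝ, ∫⁻ t : ℝ,
        ({s : ℝ | 0 < s ∧ ENNReal.ofReal s < a k}.indicator (1 : ℝ → ℝ≥0∞) s) *
        ({t : ℝ | 0 < t ∧ ENNReal.ofReal t < b k}.indicator (1 : ℝ → ℝ≥0∞) t) := tsum_congr key
    _ = ∫⁻ s : ℝ, ∑' k, ∫⁻ t : ℝ,
        ({s : ℝ | 0 < s ∧ ENNReal.ofReal s < a k}.indicator (1 : ℝ → ℝ≥0∞) s) *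
        ({t : ℝ | 0 < t ∧ ENNReal.ofReal t < b k}.indicator (1 : ℝ → ℝ≥0∞) t) := by
        rw [← lintegral_tsum]
        intro k
        exact ((mbleP (a k)).mul_const _).aemeasurable.congr (by
          refine Filter.EventuallyEq.of_eq ?_
          funext s
          rw [lintegral_const_mul _ (mbleP (b k)), lintegral_indicator_one (layer_mble (b k))])
    _ = ∫⁻ s : ℝ, ∫⁻ t : ℝ, ∑' k,
        ({s : ℝ | 0 < s ∧ ENNReal.ofReal s < a k}.indicator (1 : ℝ → ℝ≥0∞) s) *
        ({t : ℝ | 0 < t ∧ ENNReal.ofReal t < b k}.indicator (1 : ℝ → ℝ≥0∞) t) := by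
        congr 1; funext s
        rw [← lintegral_tsum]
        intro k
        exact ((mbleP (b k)).const_mul _).aemeasurable
    _ = ∫⁻ s : ℝ, ∫⁻ t : ℝ,
        Measure.count {k : ℕ | (0 < s ∧ ENNReal.ofReal s < a k) ∧ (0 < t ∧ ENNReal.ofReal t < b k)} := by
        congr 1; funext s; congr 1; funext t
        have hpt : ∀ k : ℕ,
            ({s : ℝ | 0 < s ∧ ENNReal.ofReal s < a k}.indicator (1 : ℝ → ℝ≥0∞) s) *
            ({t : ℝ | 0 < t ∧ ENNReal.ofReal t < b k}.indicator (1 : ℝ → ℝ≥0∞) t) =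
            ({k : ℕ | (0 < s ∧ ENNReal.ofReal s < a k) ∧ (0 < t ∧ ENNReal.ofReal t < b k)}.indicator
              (1 : ℕ → ℝ≥0∞) k) := by
          intro k
          by_cases h1 : 0 < s ∧ ENNReal.ofReal s < a k <;>
            by_cases h2 : 0 < t ∧ ENNReal.ofReal t < b k <;>
            simp [Set.indicator_apply, h1, h2]
        rw [tsum_congr hpt, ← tsum_subtype]
        rw [Measure.count_apply (by trivial)]
        exact ENNReal.tsum_set_one _

lemma HL (a b : ℕ → ℝ≥0∞) :
    ∑' k, a k * b k ≤ ∑' n, rearrE a n * rearrE b n := by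
  rw [double_layer a b, double_layer (rearrE a) (rearrE b)]
  refine lintegral_mono fun s => lintegral_mono fun t => ?_
  by_cases hs : 0 < s
  · by_cases ht : 0 < t
    · set Da := Measure.count {k : ℕ | ENNReal.ofReal s < a k} with hDa
      set Db := Measure.count {k : ℕ | ENNReal.ofReal t < b k} with hDb
      have hset : {n : ℕ | (0 < s ∧ ENNReal.ofReal s < rearrE a n) ∧ (0 < t ∧ ENNReal.ofReal t < rearrE b n)}
          = {n : ℕ | (n : ℝ≥0∞) < min Da Db} := by
        ext n
        simp only [mem_setOf_eq, hs, ht, true_and, lt_min_iff]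
        rw [lt_rearrE_iff a, lt_rearrE_iff b]
      rw [hset, count_natCast_lt]
      · refine le_min ?_ ?_
        · exact measure_mono fun k hk => hk.1.2
        · exact measure_mono fun k hk => hk.2.2
      · rcases count_cases {k : ℕ | ENNReal.ofReal s < a k} with h | ⟨m, h⟩ <;>
          rcases count_cases {k : ℕ | ENNReal.ofReal t < b k} with h' | ⟨m', h'⟩
        · left; rw [← hDa] at h; rw [← hDb] at h'; simp [h, h']
        · right; exact ⟨m', by rw [← hDa] at h; rw [← hDb] at h'; simp [h, h']⟩
        · right; exact ⟨m, by rw [← hDa] at h; rw [← hDb] at h'; simp [h, h']⟩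
        · right
          refine ⟨min m m', ?_⟩
          rw [← hDa] at h; rw [← hDb] at h'
          rw [h, h']
          rcases le_total m m' with hmm | hmm
          · rw [min_eq_left hmm, min_eq_left (by exact_mod_cast hmm : (m:ℝ≥0∞) ≤ m')]
          · rw [min_eq_right hmm, min_eq_right (by exact_mod_cast hmm : (m':ℝ≥0∞) ≤ m)]
    · have : {k : ℕ | (0 < s ∧ ENNReal.ofReal s < a k) ∧ (0 < t ∧ ENNReal.ofReal t < b k)} = ∅ := by
        ext k; simp [ht]
      rw [this]; simp
  · have : {k : ℕ | (0 < s ∧ ENNReal.ofReal s < a k) ∧ (0 < t ∧ ENNReal.ofReal t < b k)} = ∅ := by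
      ext k; simp [hs]
    rw [this]; simp

lemma exists_pick (A : ℕ → Set ℕ) (N : ℕ)
    (hA : ∀ n < N, ∀ F : Finset ℕ, F.card ≤ n → (A n \ ↑F).Nonempty) :
    ∃ pick : ℕ → ℕ, (∀ n < N, pick n ∈ A n) ∧ ∀ m < N, ∀ n < N, pick m = pick n → m = n := by
  induction N with
  | zero => exact ⟨id, fun n hn => absurd hn (Nat.not_lt_zero n), fun m hm => absurd hm (Nat.not_lt_zero m)⟩
  | succ N ih =>
    obtain ⟨pick, hmem, hinj⟩ := ih (fun n hn F hF => hA n (hn.trans (Nat.lt_succ_self N)) F hF)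
    have hne : (A N \ ↑((Finset.range N).image pick)).Nonempty := by
      apply hA N (Nat.lt_succ_self N)
      calc ((Finset.range N).image pick).card ≤ (Finset.range N).card := Finset.card_image_le
        _ = N := Finset.card_range N
    obtain ⟨x, hxA, hxF⟩ := hne
    refine ⟨fun n => if n = N then x else pick n, ?_, ?_⟩
    · intro n hn
      by_cases h : n = N
      · simp only [h, if_pos rfl]; exact h ▸ hxA
      · simp only [if_neg h]; exact hmem n (Nat.lt_of_le_of_ne (Nat.lt_succ_iff.1 hn) h)
    · intro m hm n hn heq
      by_cases h1 : m = N <;> by_cases h2 : n = N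
      · rw [h1, h2]
      · exfalso
        simp only [if_pos h1, if_neg h2] at heq
        apply hxF
        simp only [Finset.coe_image, Finset.coe_range, Set.mem_image]
        exact ⟨n, Set.mem_Iio.2 (Nat.lt_of_le_of_ne (Nat.lt_succ_iff.1 hn) h2), heq.symm⟩
      · exfalso
        simp only [if_neg h1, if_pos h2] at heq
        apply hxF
        simp only [Finset.coe_image, Finset.coe_range, Set.mem_image]
        exact ⟨m, Set.mem_Iio.2 (Nat.lt_of_le_of_ne (Nat.lt_succ_iff.1 hm) h1), heq⟩
      · simp only [if_neg h1, if_neg h2] at heq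
        exact hinj m (Nat.lt_of_le_of_ne (Nat.lt_succ_iff.1 hm) h1) n
          (Nat.lt_of_le_of_ne (Nat.lt_succ_iff.1 hn) h2) heq

lemma trunc_monotone (x : ℝ≥0∞) : Monotone (fun j : ℕ => min x j - ((j:ℝ≥0∞)+1)⁻¹) := by
  intro i j hij
  apply tsub_le_tsub
  · exact min_le_min le_rfl (by exact_mod_cast hij)
  · exact ENNReal.inv_le_inv.2 (by exact_mod_cast Nat.succ_le_succ hij)

lemma iSup_trunc (x : ℝ≥0∞) : ⨆ j : ℕ, (min x (j:ℝ≥0∞) - ((j:ℝ≥0∞)+1)⁻¹) = x := by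
  apply le_antisymm
  · exact iSup_le fun j => le_trans tsub_le_self (min_le_left _ _)
  · by_cases hx : x = ⊤
    · subst hx
      rw [top_le_iff, iSup_eq_top]
      intro b hb
      obtain ⟨m, hm⟩ := ENNReal.exists_nat_gt hb.ne
      refine ⟨m + 1, ?_⟩
      have h1 : min ⊤ ((m+1:ℕ):ℝ≥0∞) = ((m+1:ℕ):ℝ≥0∞) := min_eq_right le_top
      rw [h1]
      calc b < (m:ℝ≥0∞) := hm
        _ ≤ ((m+1:ℕ):ℝ≥0∞) - 1 := by
            push_cast
            rw [ENNReal.add_sub_cancel_right ENNReal.one_ne_top]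
        _ ≤ ((m+1:ℕ):ℝ≥0∞) - (((m+1:ℕ):ℝ≥0∞)+1)⁻¹ := by
            apply tsub_le_tsub le_rfl
            exact ENNReal.inv_le_one.2 (by exact_mod_cast le_add_self)
    · apply ENNReal.le_of_forall_pos_le_add
      intro ε hε _
      obtain ⟨m, hm⟩ := ENNReal.exists_nat_gt hx
      obtain ⟨m', hm'⟩ := exists_nat_gt (ε⁻¹ : ℝ≥0)
      set j := max m m' with hj
      have hxj : min x (j:ℝ≥0∞) = x :=
        min_eq_left (le_trans hm.le (by exact_mod_cast le_max_left m m'))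
      have hde : (((j:ℝ≥0∞))+1)⁻¹ ≤ (ε : ℝ≥0∞) := by
        rw [← inv_inv (ε : ℝ≥0∞)]
        apply ENNReal.inv_le_inv.2
        calc ((ε : ℝ≥0∞))⁻¹ = ((ε⁻¹ : ℝ≥0) : ℝ≥0∞) := by
              rw [ENNReal.coe_inv hε.ne']
          _ ≤ ((m' : ℝ≥0) : ℝ≥0∞) := by exact_mod_cast hm'.le
          _ ≤ (j:ℝ≥0∞) + 1 := by
              push_cast
              exact le_trans (by exact_mod_cast le_max_right m m') le_self_add
      calc x ≤ (x - ((j:ℝ≥0∞)+1)⁻¹) + ((j:ℝ≥0∞)+1)⁻¹ := le_tsub_add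
        _ ≤ (⨆ i : ℕ, (min x (i:ℝ≥0∞) - ((i:ℝ≥0∞)+1)⁻¹)) + (ε:ℝ≥0∞) := by
            apply add_le_add
            · exact le_iSup_of_le j (by rw [hxj])
            · exact hde

/-- For `0 < p < ∞`, the associate norm of `d^∞(Ω,p)` satisfies
`‖f‖_{d^∞(Ω,p)'} = Σ_n f*(n) W_n^{-1/p}`, i.e. `d^∞(Ω,p)' = d(W^{-1/p},1)` with equal norms. -/
theorem stmt13 (p : ℝ) (hp : 0 < p) (Ω : ℕ → ℝ) (hΩ : ∀ n, 0 < Ω n) (f : ℕ → ℝ) :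
    (⨆ g ∈ {g : ℕ → ℝ | wdNorm Ω p g ≤ 1}, ∑' n, ENNReal.ofReal |f n * g n|) =
      ∑' n, rearrSeq f n *
        ENNReal.ofReal ((∑ k ∈ Finset.range (n + 1), Ω k) ^ (-(1 / p))) := by
  set W : ℕ → ℝ := fun n => ∑ k ∈ Finset.range (n + 1), Ω k with hW
  set c : ℕ → ℝ := fun n => W n ^ (-(1 / p)) with hc
  have hWpos : ∀ n, 0 < W n := fun n =>
    Finset.sum_pos (fun k _ => hΩ k) ⟨0, Finset.mem_range.2 (Nat.succ_pos n)⟩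
  have hWmono : Monotone W := by
    intro m n hmn
    apply Finset.sum_le_sum_of_subset_of_nonneg
    · exact Finset.range_subset_range.2 (Nat.succ_le_succ hmn)
    · exact fun k _ _ => (hΩ k).le
  have hcpos : ∀ n, 0 < c n := fun n => Real.rpow_pos_of_pos (hWpos n) _
  have hcanti : ∀ m n, m ≤ n → c n ≤ c m := by
    intro m n hmn
    simp only [hc, Real.rpow_neg (hWpos _).le]
    apply inv_anti₀ (Real.rpow_pos_of_pos (hWpos m) _)
    exact Real.rpow_le_rpow (hWpos m).le (hWmono hmn) (by positivity)
  have hrf : ∀ (h : ℕ → ℝ), rearrSeq h = rearrE (fun k => ENNReal.ofReal |h k|) := fun h => rfl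
  have hcinv : ∀ n, ENNReal.ofReal (c n) = (ENNReal.ofReal (W n ^ (1 / p)))⁻¹ := by
    intro n
    rw [hc]
    simp only
    rw [Real.rpow_neg (hWpos n).le, ENNReal.ofReal_inv_of_pos (Real.rpow_pos_of_pos (hWpos n) _)]
  have hkey1 : ∀ n, ENNReal.ofReal (W n ^ (1 / p)) * ENNReal.ofReal (c n) = 1 := by
    intro n
    rw [← ENNReal.ofReal_mul (Real.rpow_nonneg (hWpos n).le _)]
    rw [hc]
    simp only
    rw [← Real.rpow_add (hWpos n), add_neg_cancel, Real.rpow_zero, ENNReal.ofReal_one]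
  apply le_antisymm
  · -- upper bound
    refine iSup₂_le fun g hg => ?_
    have hgn : ∀ n, rearrSeq g n ≤ ENNReal.ofReal (c n) := by
      intro n
      have h1 : ENNReal.ofReal (W n ^ (1 / p)) * rearrSeq g n ≤ 1 :=
        le_trans (le_iSup (fun n => ENNReal.ofReal (W n ^ (1 / p)) * rearrSeq g n) n) hg
      rw [hcinv n, ENNReal.le_inv_iff_mul_le, mul_comm]
      exact h1
    calc ∑' n, ENNReal.ofReal |f n * g n|
        = ∑' n, (fun k => ENNReal.ofReal |f k|) n * (fun k => ENNReal.ofReal |g k|) n := by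
          apply tsum_congr
          intro n
          rw [abs_mul, ENNReal.ofReal_mul (abs_nonneg _)]
      _ ≤ ∑' n, rearrE (fun k => ENNReal.ofReal |f k|) n * rearrE (fun k => ENNReal.ofReal |g k|) n :=
          HL _ _
      _ = ∑' n, rearrSeq f n * rearrSeq g n := by rw [← hrf f, ← hrf g]
      _ ≤ ∑' n, rearrSeq f n * ENNReal.ofReal (c n) :=
          ENNReal.tsum_le_tsum fun n => mul_le_mul_right (hgn n) _
  · -- lower bound
    set SUP := ⨆ g ∈ {g : ℕ → ℝ | wdNorm Ω p g ≤ 1}, ∑' n, ENNReal.ofReal |f n * g n| with hSUP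
    -- key claim
    have hkey : ∀ N : ℕ, (∀ n < N, rearrSeq f n ≠ 0) →
        ∑ n ∈ Finset.range N, rearrSeq f n * ENNReal.ofReal (c n) ≤ SUP := by
      intro N hNz
      -- step A : rewrite as sup over j
      have hA : ∑ n ∈ Finset.range N, rearrSeq f n * ENNReal.ofReal (c n)
          = ⨆ j : ℕ, ∑ n ∈ Finset.range N,
              (min (rearrSeq f n) j - ((j:ℝ≥0∞)+1)⁻¹) * ENNReal.ofReal (c n) := by
        rw [← ENNReal.finsetSum_iSup_of_monotone]
        · apply Finset.sum_congr rfl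
          intro n _
          rw [← ENNReal.iSup_mul, iSup_trunc]
        · intro n
          exact fun i j hij => mul_le_mul_left (trunc_monotone (rearrSeq f n) hij) _
      rw [hA]
      refine iSup_le fun j => ?_
      set d : ℝ≥0∞ := ((j:ℝ≥0∞)+1)⁻¹ with hd
      set sn : ℕ → ℝ≥0∞ := fun n => min (rearrSeq f n) j - d with hsn
      have hslt : ∀ n < N, sn n < rearrSeq f n := by
        intro n hn
        rcases le_or_gt (rearrSeq f n) (j:ℝ≥0∞) with h | h
        · have : min (rearrSeq f n) j = rearrSeq f n := min_eq_left h
          rw [hsn]; simp only [this]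
          apply ENNReal.sub_lt_self (h.trans_lt (ENNReal.natCast_lt_top j)).ne (hNz n hn)
          simp [hd]
        · calc sn n ≤ min (rearrSeq f n) j := tsub_le_self
            _ ≤ (j:ℝ≥0∞) := min_le_right _ _
            _ < rearrSeq f n := h
      set A : ℕ → Set ℕ := fun n => {k : ℕ | sn n < ENNReal.ofReal |f k|} with hAdef
      have hcount : ∀ n < N, (n:ℝ≥0∞) < Measure.count (A n) := by
        intro n hn
        have := hslt n hn
        rw [hrf f] at this
        exact (lt_rearrE_iff (fun k => ENNReal.ofReal |f k|)).1 this
      have hANE : ∀ n < N, ∀ F : Finset ℕ, F.card ≤ n → (A n \ ↑F).Nonempty := by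
        intro n hn F hF
        rw [Set.nonempty_iff_ne_empty]
        intro hemp
        have hsub : A n ⊆ ↑F := by
          intro k hk
          by_contra hk2
          exact (Set.eq_empty_iff_forall_notMem.1 hemp k) ⟨hk, hk2⟩
        have : Measure.count (A n) ≤ (n : ℝ≥0∞) := by
          calc Measure.count (A n) ≤ Measure.count (↑F : Set ℕ) := measure_mono hsub
            _ = F.card := Measure.count_apply_finset F
            _ ≤ (n : ℝ≥0∞) := by exact_mod_cast hF
        exact absurd this (not_le.2 (hcount n hn))
      obtain ⟨pick, hpmem, hpinj⟩ := exists_pick A N hANE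
      set g : ℕ → ℝ := fun k => ∑ n ∈ Finset.range N, if pick n = k then c n else 0 with hgdef
      have hg0 : ∀ k, 0 ≤ g k := by
        intro k
        apply Finset.sum_nonneg
        intro n _
        split
        · exact (hcpos n).le
        · exact le_rfl
      have hgpick : ∀ n < N, g (pick n) = c n := by
        intro n hn
        rw [hgdef]
        simp only
        rw [Finset.sum_eq_single_of_mem n (Finset.mem_range.2 hn)]
        · exact if_pos rfl
        · intro m hm hmn
          exact if_neg (fun h => hmn (hpinj m (Finset.mem_range.1 hm) n hn h))
      have hgval : ∀ k, g k ≠ 0 → ∃ n, n < N ∧ pick n = k ∧ g k = c n := by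
        intro k hk
        by_cases h : ∃ n, n < N ∧ pick n = k
        · obtain ⟨n, hn, hpk⟩ := h
          exact ⟨n, hn, hpk, by rw [← hpk, hgpick n hn]⟩
        · exfalso
          apply hk
          rw [hgdef]
          simp only
          apply Finset.sum_eq_zero
          intro n hn
          exact if_neg (fun he => h ⟨n, Finset.mem_range.1 hn, he⟩)
      have hgre : ∀ m : ℕ, rearrSeq g m ≤ ENNReal.ofReal (c m) := by
        intro m
        rw [hrf g]
        apply (rearrE_le_iff _).2
        have hsub : {k : ℕ | ENNReal.ofReal (c m) < ENNReal.ofReal |g k|}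
            ⊆ ↑((Finset.range (min m N)).image pick) := by
          intro k hk
          simp only [mem_setOf_eq] at hk
          have hck : c m < |g k| := by
            by_contra hle
            exact absurd hk (not_lt.2 (ENNReal.ofReal_le_ofReal (not_lt.1 hle)))
          rw [abs_of_nonneg (hg0 k)] at hck
          have hkne : g k ≠ 0 := fun h => by
            rw [h] at hck; exact absurd hck (not_lt.2 (hcpos m).le)
          obtain ⟨n, hn, hpk, hgk⟩ := hgval k hkne
          have hnm : n < m := by
            by_contra hge
            rw [hgk] at hck
            exact absurd hck (not_lt.2 (hcanti m n (not_lt.1 hge)))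
          simp only [Finset.coe_image, Set.mem_image, Finset.mem_coe, Finset.coe_range]
          exact ⟨n, by simp [Finset.mem_range, lt_min_iff]; exact ⟨hnm, hn⟩, hpk⟩
        calc Measure.count {k : ℕ | ENNReal.ofReal (c m) < ENNReal.ofReal |g k|}
            ≤ Measure.count (↑((Finset.range (min m N)).image pick) : Set ℕ) := measure_mono hsub
          _ = ((Finset.range (min m N)).image pick).card := Measure.count_apply_finset _
          _ ≤ (m : ℝ≥0∞) := by
              have h1 : ((Finset.range (min m N)).image pick).card ≤ min m N :=
                le_trans Finset.card_image_le (le_of_eq (Finset.card_range _))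
              exact_mod_cast le_trans h1 (min_le_left m N)
      have hwd : wdNorm Ω p g ≤ 1 := by
        rw [wdNorm]
        refine iSup_le fun n => ?_
        calc ENNReal.ofReal ((∑ k ∈ Finset.range (n + 1), Ω k) ^ (1 / p)) * rearrSeq g n
            ≤ ENNReal.ofReal (W n ^ (1 / p)) * ENNReal.ofReal (c n) := mul_le_mul_right (hgre n) _
          _ = 1 := hkey1 n
      -- final estimate
      have hest : ∑ n ∈ Finset.range N, sn n * ENNReal.ofReal (c n)
          ≤ ∑' k, ENNReal.ofReal |f k * g k| := by
        calc ∑ n ∈ Finset.range N, sn n * ENNReal.ofReal (c n)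
            ≤ ∑ n ∈ Finset.range N, ENNReal.ofReal |f (pick n) * g (pick n)| := by
              apply Finset.sum_le_sum
              intro n hn
              have hn' := Finset.mem_range.1 hn
              rw [hgpick n hn', abs_mul, abs_of_nonneg (hcpos n).le,
                ENNReal.ofReal_mul (abs_nonneg _)]
              exact mul_le_mul_left (le_of_lt (hpmem n hn')) _
          _ = ∑ k ∈ (Finset.range N).image pick, ENNReal.ofReal |f k * g k| := by
              rw [Finset.sum_image]
              intro m hm n hn h
              exact hpinj m (Finset.mem_range.1 hm) n (Finset.mem_range.1 hn) h
          _ ≤ ∑' k, ENNReal.ofReal |f k * g k| := ENNReal.sum_le_tsum _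
      refine le_trans hest ?_
      rw [hSUP]
      exact le_iSup₂_of_le g hwd le_rfl
    -- from hkey to general N
    have hgen : ∀ N : ℕ, ∑ n ∈ Finset.range N, rearrSeq f n * ENNReal.ofReal (c n) ≤ SUP := by
      intro N
      by_cases hz : ∃ n, n < N ∧ rearrSeq f n = 0
      · classical
        set M := Nat.find hz with hM
        obtain ⟨hMN, hM0⟩ := Nat.find_spec hz
        have hMz : ∀ n < M, rearrSeq f n ≠ 0 := by
          intro n hn
          have := Nat.find_min hz hn
          push_neg at this
          exact this (hn.trans hMN)
        have hzero : ∀ n, M ≤ n → rearrSeq f n = 0 := by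
          intro n hn
          have h1 : rearrSeq f n ≤ rearrSeq f M := by
            rw [hrf f]
            exact rearrE_antitone _ hn
          rw [hM0] at h1
          exact le_antisymm h1 zero_le
        have hsum : ∑ n ∈ Finset.range N, rearrSeq f n * ENNReal.ofReal (c n)
            = ∑ n ∈ Finset.range M, rearrSeq f n * ENNReal.ofReal (c n) := by
          symm
          apply Finset.sum_subset (Finset.range_subset_range.2 hMN.le)
          intro n _ hnM
          rw [hzero n (not_lt.1 (fun h => hnM (Finset.mem_range.2 h))), zero_mul]
        rw [hsum]
        exact hkey M hMz
      · push_neg at hz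
        exact hkey N hz
    rw [ENNReal.tsum_eq_iSup_sum]
    refine iSup_le fun F => ?_
    have hFsub : F ⊆ Finset.range (F.sup id + 1) := by
      intro x hx
      exact Finset.mem_range.2 (Nat.lt_succ_of_le (Finset.le_sup (f := id) hx))
    calc ∑ n ∈ F, rearrSeq f n * ENNReal.ofReal (c n)
        ≤ ∑ n ∈ Finset.range (F.sup id + 1), rearrSeq f n * ENNReal.ofReal (c n) :=
          Finset.sum_le_sum_of_subset hFsub
      _ ≤ SUP := hgen _
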